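/- Let A₁ ≥ 1 and r ≥ 1 be integers, let X_{i,k} ∈ {0,1} for 1 ≤ i ≤ A₁ and 1 ≤ k ≤ r be arbitrary, let 0 < q ≤ 1 and 0 ≤ s ≤ 1, and consider the q-process with pile sizes A₁ = A_1, A_2, …, A_{r+1} and the s-threshold process with pile sizes A^[s]_1, A^[s]_2, …, A^[s]_{r+1}, both driven by the same values X_{i,k}. If ⌈s·A₁⌉ ≤ ⌈q·A₁⌉, then A^[s]_k ≥ A_k for every k = 1, …, r+1. -/

import Mathlib

open scoped Classical in
/-- The q-process: cards are labeled 1,…,A1; S₀ = {1,…,A1}, and at step k+1 every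
remaining card i with X i (k+1) = true that is among the ⌈q·|Sₖ|⌉ smallest remaining
labels is removed.  `qProc q A1 X k` is the set of remaining cards after k steps,
so its cardinality is A_{k+1}. -/
noncomputable def qProc (q : ℝ) (A1 : ℕ) (X : ℕ → ℕ → Bool) : ℕ → Finset ℕ
  | 0 => Finset.Icc 1 A1
  | (k + 1) =>
      (qProc q A1 X k).filter fun i =>
        ¬(X i (k + 1) = true ∧
          ((qProc q A1 X k).filter (· ≤ i)).card ≤ ⌈q * ((qProc q A1 X k).card : ℝ)⌉₊)

open scoped Classical in
/-- The s-threshold process: cards are labeled 1,…,A1; T₀ = {1,…,A1}, and at step k+1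
every remaining card i with X i (k+1) = true and i ≤ s·A1 is removed.
`sProc s A1 X k` is the set of remaining cards after k steps, so its cardinality
is A^[s]_{k+1}. -/
noncomputable def sProc (s : ℝ) (A1 : ℕ) (X : ℕ → ℕ → Bool) : ℕ → Finset ℕ
  | 0 => Finset.Icc 1 A1
  | (k + 1) =>
      (sProc s A1 X k).filter fun i => ¬(X i (k + 1) = true ∧ (i : ℝ) ≤ s * A1)

/-!
Every card with label at most `s·A₁` stays, throughout the q-process, among the `⌈q·|S_k|⌉`
smallest remaining cards. Initially this is the hypothesis `⌈s·A₁⌉ ≤ ⌈q·A₁⌉`. In one step the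
removed cards all lie in that window, so removing `d` of them lowers the window size by at most
`d` (as `q ≤ 1`), while the rank of a surviving card plus `d` still fits in the old window.
Consequently a card of `S_k` that the threshold process removes is removed by the q-process at
the same step, so `S_k ⊆ T_k` for all `k`.
-/

open Finset

section Rank

variable {α : Type*} [LinearOrder α] (S : Finset α)

def rank (i : α) : ℕ := #(S.filter (· ≤ i))

theorem rank_mono : Monotone (rank S) := fun _ _ hij =>
  card_le_card (monotone_filter_right S fun _ _ hj => hj.trans hij)

theorem rank_strictMonoOn : StrictMonoOn (rank S) S := fun _ _ j hj hij =>
  card_lt_card <| (ssubset_iff_of_subset (monotone_filter_right S fun _ _ hk => hk.trans hij.le)).2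
    ⟨j, mem_filter.2 ⟨hj, le_rfl⟩, fun hj' => (mem_filter.1 hj').2.not_gt hij⟩

theorem card_filter_rank_le (c : ℕ) : #(S.filter (rank S · ≤ c)) ≤ c :=
  calc #(S.filter (rank S · ≤ c))
      ≤ #(Icc 1 c) := by
        refine card_le_card_of_injOn (rank S) (fun j hj => ?_) fun j hj j' hj' =>
          (rank_strictMonoOn S).injOn (mem_filter.1 hj).1 (mem_filter.1 hj').1
        obtain ⟨hjS, hjc⟩ := mem_filter.1 hj
        exact mem_Icc.2 ⟨card_pos.2 ⟨j, mem_filter.2 ⟨hjS, le_rfl⟩⟩, hjc⟩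
    _ = c := by simp

/-- The surviving cards up to `i` and the removed cards are disjoint and all lie in the window
of the `c` smallest elements of `S`. -/
theorem rank_sdiff_add_card_le {R : Finset α} {c : ℕ} {i : α} (hRS : R ⊆ S)
    (hR : ∀ j ∈ R, rank S j ≤ c) (hi : rank S i ≤ c) : rank (S \ R) i + #R ≤ c := by
  have hdisj : Disjoint ((S \ R).filter (· ≤ i)) R :=
    disjoint_of_subset_left (filter_subset _ _) sdiff_disjoint
  calc rank (S \ R) i + #R = #((S \ R).filter (· ≤ i) ∪ R) := (card_union_of_disjoint hdisj).symm
    _ ≤ #(S.filter (rank S · ≤ c)) := by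
        refine card_le_card (union_subset (fun j hj => ?_) fun j hj => ?_)
        · obtain ⟨hjSR, hji⟩ := mem_filter.1 hj
          exact mem_filter.2 ⟨(mem_sdiff.1 hjSR).1, (rank_mono S hji).trans hi⟩
        · exact mem_filter.2 ⟨hRS hj, hR j hj⟩
    _ ≤ c := card_filter_rank_le S c

end Rank

theorem Nat.ceil_mul_add_le {R : Type*} [Semiring R] [LinearOrder R] [IsStrictOrderedRing R]
    [FloorSemiring R] {q : R} (hq : q ≤ 1) (m n : ℕ) :
    ⌈q * (m + n)⌉₊ ≤ ⌈q * m⌉₊ + n :=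
  calc ⌈q * (m + n)⌉₊ ≤ ⌈q * m + n⌉₊ := by
        gcongr ⌈?_⌉₊
        rw [mul_add]
        gcongr
        exact mul_le_of_le_one_left n.cast_nonneg hq
    _ ≤ ⌈q * m⌉₊ + ⌈(n : R)⌉₊ := Nat.ceil_add_le _ _
    _ = ⌈q * m⌉₊ + n := by rw [Nat.ceil_natCast]

section Processes

variable (q s : ℝ) (A1 : ℕ) (X : ℕ → ℕ → Bool)

noncomputable def qRemoved (k : ℕ) : Finset ℕ :=
  (qProc q A1 X k).filter fun i =>
    X i (k + 1) = true ∧ rank (qProc q A1 X k) i ≤ ⌈q * #(qProc q A1 X k)⌉₊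

theorem qProc_succ (k : ℕ) : qProc q A1 X (k + 1) = qProc q A1 X k \ qRemoved q A1 X k := by
  rw [qRemoved, ← filter_not, qProc]
  rfl

variable {q s A1}

theorem rank_qProc_le (hq1 : q ≤ 1) (h : ⌈s * (A1 : ℝ)⌉₊ ≤ ⌈q * (A1 : ℝ)⌉₊) (k : ℕ) {i : ℕ}
    (hi : (i : ℝ) ≤ s * A1) : rank (qProc q A1 X k) i ≤ ⌈q * #(qProc q A1 X k)⌉₊ := by
  induction k with
  | zero =>
    have hrank : rank (Icc 1 A1) i ≤ i :=
      calc rank (Icc 1 A1) i ≤ #(Icc 1 i) := card_le_card fun j hj =>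
            mem_Icc.2 ⟨(mem_Icc.1 (mem_filter.1 hj).1).1, (mem_filter.1 hj).2⟩
        _ = i := by simp
    have hiceil : i ≤ ⌈s * (A1 : ℝ)⌉₊ := by exact_mod_cast hi.trans (Nat.le_ceil _)
    simpa [qProc] using hrank.trans (hiceil.trans h)
  | succ k ih =>
    rw [qProc_succ]
    set S := qProc q A1 X k
    set R := qRemoved q A1 X k
    have hRS : R ⊆ S := filter_subset _ _
    have hkept :=
      rank_sdiff_add_card_le (c := ⌈q * #S⌉₊) S hRS (fun j hj => (mem_filter.1 hj).2.2) ih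
    have hwindow := Nat.ceil_mul_add_le hq1 #(S \ R) #R
    rw [← Nat.cast_add, card_sdiff_add_card_eq_card hRS] at hwindow
    omega

theorem qProc_subset_sProc (hq1 : q ≤ 1) (h : ⌈s * (A1 : ℝ)⌉₊ ≤ ⌈q * (A1 : ℝ)⌉₊) (k : ℕ) :
    qProc q A1 X k ⊆ sProc s A1 X k := by
  induction k with
  | zero => exact subset_rfl
  | succ k ih =>
    intro i hi
    obtain ⟨hiS, hkept⟩ := mem_sdiff.1 (qProc_succ q A1 X k ▸ hi)
    refine mem_filter.2 ⟨ih hiS, fun ⟨hX, his⟩ => hkept (mem_filter.2 ⟨hiS, hX, ?_⟩)⟩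
    exact rank_qProc_le X hq1 h k his

end Processes

theorem stmt7_general (A1 r : ℕ) (X : ℕ → ℕ → Bool)
    (q s : ℝ) (hq1 : q ≤ 1)
    (h : ⌈s * (A1 : ℝ)⌉₊ ≤ ⌈q * (A1 : ℝ)⌉₊) :
    ∀ k : ℕ, k ≤ r → (qProc q A1 X k).card ≤ (sProc s A1 X k).card :=
  fun k _ => card_le_card (qProc_subset_sProc X hq1 h k)

theorem stmt7 (A1 r : ℕ) (hA1 : 1 ≤ A1) (hr : 1 ≤ r) (X : ℕ → ℕ → Bool)
    (q s : ℝ) (hq : 0 < q) (hq1 : q ≤ 1) (hs : 0 ≤ s) (hs1 : s ≤ 1)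
    (h : ⌈s * (A1 : ℝ)⌉₊ ≤ ⌈q * (A1 : ℝ)⌉₊) :
    ∀ k : ℕ, k ≤ r → (qProc q A1 X k).card ≤ (sProc s A1 X k).card :=
  stmt7_general A1 r X q s hq1 h
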